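/- Let G be a locally compact Hausdorff second countable group with Haar measure dg acting properly on a locally compact G-space X with X/G compact. Then there exists a cutoff function on X: a continuous function c : X → ℝ≥0 such that supp(c) ∩ G·K is compact for every compact K ⊆ X, and ∫_G c(g⁻¹x) dg = 1 for every x ∈ X. -/

import Mathlib

/-!
Choose a compact set `S` meeting every orbit (the quotient map `X → X/G` is open and `X/G` is
compact) and a compactly supported continuous `f ≥ 0` equal to `1` on `S`. Properness makes
`g ↦ f (g⁻¹ • x)` compactly supported, locally uniformly in `x`, so `F x = ∫ f (g⁻¹ • x) dg` is
continuous and positive; left invariance of Haar measure makes `F` constant on orbits, hence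
`c = f / F` has orbit integrals `F x / F x = 1`.
-/

open Pointwise MeasureTheory

/-- Bourbaki-properness of a group action on a topological space. -/
def BourbakiProper (G X : Type*) [Group G] [TopologicalSpace G] [TopologicalSpace X]
    [MulAction G X] : Prop :=
  ∀ x y : X, ∃ U V : Set X, IsOpen U ∧ IsOpen V ∧ x ∈ U ∧ y ∈ V ∧
    IsCompact (closure {g : G | (g • U ∩ V).Nonempty})

open Set Filter Topology

lemma IsOpenMap.exists_isCompact_image_eq_univ {X Y : Type*} [TopologicalSpace X]
    [TopologicalSpace Y] [WeaklyLocallyCompactSpace X] [CompactSpace Y] {π : X → Y}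
    (hπ : IsOpenMap π) (hsurj : Function.Surjective π) :
    ∃ K : Set X, IsCompact K ∧ π '' K = univ := by
  choose N hNc hN using fun x : X => exists_compact_mem_nhds x
  set σ := Function.surjInv hsurj
  obtain ⟨t, -, ht⟩ := isCompact_univ.elim_nhds_subcover (fun y => π '' N (σ y)) fun y _ => by
    simpa [σ, Function.surjInv_eq hsurj] using hπ.image_mem_nhds (hN (σ y))
  refine ⟨⋃ y ∈ t, N (σ y), t.finite_toSet.isCompact_biUnion fun y _ => hNc _,
    univ_subset_iff.1 ?_⟩
  simpa only [image_iUnion₂] using ht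

namespace BourbakiProper

variable {G X : Type*} [Group G] [TopologicalSpace G] [TopologicalSpace X] [MulAction G X]

lemma exists_mem_nhds_isCompact_forall_smul_inter_nonempty_mem (hp : BourbakiProper G X)
    (a : X) {B : Set X} (hB : IsCompact B) :
    ∃ U ∈ 𝓝 a, ∃ L : Set G, IsCompact L ∧ ∀ g : G, (g • U ∩ B).Nonempty → g ∈ L := by
  refine hB.induction_on ⟨univ, univ_mem, ∅, isCompact_empty, by simp⟩ ?_ ?_ ?_
  · rintro B₁ B₂ hB ⟨U, hU, L, hL, hUL⟩
    exact ⟨U, hU, L, hL, fun g hg => hUL g (hg.mono (inter_subset_inter_right _ hB))⟩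
  · rintro B₁ B₂ ⟨U₁, hU₁, L₁, hL₁, hUL₁⟩ ⟨U₂, hU₂, L₂, hL₂, hUL₂⟩
    refine ⟨U₁ ∩ U₂, inter_mem hU₁ hU₂, L₁ ∪ L₂, hL₁.union hL₂, fun g hg => ?_⟩
    rw [inter_union_distrib_left, union_nonempty] at hg
    exact hg.imp
      (fun h => hUL₁ g (h.mono (inter_subset_inter_left _ (smul_set_mono inter_subset_left))))
      (fun h => hUL₂ g (h.mono (inter_subset_inter_left _ (smul_set_mono inter_subset_right))))
  · intro b _
    obtain ⟨U, V, hU, hV, haU, hbV, hL⟩ := hp a b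
    exact ⟨V, mem_nhdsWithin_of_mem_nhds (hV.mem_nhds hbV), U, hU.mem_nhds haU, _, hL,
      fun g hg => subset_closure hg⟩

lemma exists_isCompact_forall_smul_inter_nonempty_mem (hp : BourbakiProper G X)
    {A B : Set X} (hA : IsCompact A) (hB : IsCompact B) :
    ∃ L : Set G, IsCompact L ∧ ∀ g : G, (g • A ∩ B).Nonempty → g ∈ L := by
  refine hA.induction_on ⟨∅, isCompact_empty, by simp⟩ ?_ ?_ ?_
  · rintro A₁ A₂ hA ⟨L, hL, hAL⟩
    exact ⟨L, hL, fun g hg => hAL g (hg.mono (inter_subset_inter_left _ (smul_set_mono hA)))⟩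
  · rintro A₁ A₂ ⟨L₁, hL₁, hAL₁⟩ ⟨L₂, hL₂, hAL₂⟩
    refine ⟨L₁ ∪ L₂, hL₁.union hL₂, fun g hg => ?_⟩
    rw [smul_set_union, union_inter_distrib_right, union_nonempty] at hg
    exact hg.imp (hAL₁ g) (hAL₂ g)
  · intro a _
    obtain ⟨U, hU, L, hL, hUL⟩ := hp.exists_mem_nhds_isCompact_forall_smul_inter_nonempty_mem a hB
    exact ⟨U, mem_nhdsWithin_of_mem_nhds hU, L, hL, hUL⟩

lemma exists_isCompact_forall_comp_inv_smul_eq_zero {M : Type*} [Zero M]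
    (hp : BourbakiProper G X) {f : X → M} (hf : HasCompactSupport f) {B : Set X}
    (hB : IsCompact B) :
    ∃ L : Set G, IsCompact L ∧ ∀ x ∈ B, ∀ g ∉ L, f (g⁻¹ • x) = 0 := by
  obtain ⟨L, hL, hfL⟩ := hp.exists_isCompact_forall_smul_inter_nonempty_mem hf hB
  refine ⟨L, hL, fun x hx g hg => ?_⟩
  by_contra hfx
  exact hg (hfL g ⟨x, ⟨g⁻¹ • x, subset_tsupport f hfx, smul_inv_smul g x⟩, hx⟩)

lemma isCompact_inter_iUnion_smul [ContinuousSMul G X] (hp : BourbakiProper G X)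
    {C K : Set X} (hC : IsCompact C) (hC' : IsClosed C) (hK : IsCompact K) :
    IsCompact (C ∩ ⋃ g : G, g • K) := by
  obtain ⟨L, hL, hKL⟩ := hp.exists_isCompact_forall_smul_inter_nonempty_mem hK hC
  suffices C ∩ ⋃ g : G, g • K = C ∩ L • K from this ▸ (hL.smul_set hK).inter_left hC'
  refine Subset.antisymm ?_ (inter_subset_inter_right _ ?_)
  · rintro _ ⟨hxC, hxK⟩
    obtain ⟨g, k, hk, rfl⟩ := mem_iUnion.1 hxK
    exact ⟨hxC, smul_mem_smul (hKL g ⟨g • k, smul_mem_smul_set hk, hxC⟩) hk⟩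
  · rintro _ ⟨g, -, k, hk, rfl⟩
    exact mem_iUnion.2 ⟨g, smul_mem_smul_set hk⟩

end BourbakiProper

lemma MulAction.exists_isCompact_forall_exists_smul_mem (G X : Type*) [Group G]
    [TopologicalSpace G] [TopologicalSpace X] [MulAction G X] [ContinuousConstSMul G X]
    [WeaklyLocallyCompactSpace X] [CompactSpace (Quotient (MulAction.orbitRel G X))] :
    ∃ S : Set X, IsCompact S ∧ ∀ x : X, ∃ g : G, g • x ∈ S := by
  obtain ⟨S, hS, hSX⟩ := (MulAction.isOpenQuotientMap_quotientMk (Γ := G) (T := X)).isOpenMap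
    |>.exists_isCompact_image_eq_univ Quotient.mk_surjective
  refine ⟨S, hS, fun x => ?_⟩
  obtain ⟨s, hs, hsx⟩ := hSX.symm ▸ mem_univ (Quotient.mk _ x)
  obtain ⟨g, rfl⟩ := MulAction.orbitRel_apply.1 (Quotient.exact hsx)
  exact ⟨g, hs⟩

section OrbitIntegral

variable {G X : Type*} [Group G] [MeasurableSpace G] (μ : Measure G) [MulAction G X]

noncomputable def orbitIntegral (f : X → ℝ) (x : X) : ℝ := ∫ g, f (g⁻¹ • x) ∂μ

variable [MeasurableMul G] [μ.IsMulLeftInvariant]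

lemma orbitIntegral_smul (f : X → ℝ) (h : G) (x : X) :
    orbitIntegral μ f (h • x) = orbitIntegral μ f x := by
  simpa only [orbitIntegral, mul_inv_rev, inv_inv, mul_smul, inv_smul_smul] using
    integral_mul_left_eq_self (μ := μ) (fun g => f (g⁻¹ • x)) h⁻¹

lemma orbitIntegral_div_self (f : X → ℝ) {x : X} (hx : orbitIntegral μ f x ≠ 0) :
    orbitIntegral μ (fun y => f y / orbitIntegral μ f y) x = 1 := by
  change ∫ g, f (g⁻¹ • x) / orbitIntegral μ f (g⁻¹ • x) ∂μ = 1
  simp_rw [orbitIntegral_smul, integral_div]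
  exact div_self hx

end OrbitIntegral

namespace BourbakiProper

variable {G X : Type*} [Group G] [TopologicalSpace G] [IsTopologicalGroup G] [TopologicalSpace X]
  [MulAction G X] {f : X → ℝ}

lemma hasCompactSupport_comp_inv_smul (hp : BourbakiProper G X) (hf : HasCompactSupport f)
    (x : X) : HasCompactSupport fun g : G => f (g⁻¹ • x) := by
  obtain ⟨L, hL, hfL⟩ := hp.exists_isCompact_forall_comp_inv_smul_eq_zero hf isCompact_singleton
  exact HasCompactSupport.intro hL (hfL x rfl)

variable [ContinuousSMul G X] [MeasurableSpace G] [BorelSpace G] (μ : Measure G)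
  [IsFiniteMeasureOnCompacts μ]

lemma continuous_orbitIntegral [WeaklyLocallyCompactSpace X] (hp : BourbakiProper G X)
    (hf : Continuous f) (hfc : HasCompactSupport f) : Continuous (orbitIntegral μ f) := by
  refine continuous_iff_continuousAt.2 fun x => ?_
  obtain ⟨B, hB, hBx⟩ := exists_compact_mem_nhds x
  obtain ⟨L, hL, hfL⟩ := hp.exists_isCompact_forall_comp_inv_smul_eq_zero hfc hB
  exact (continuousOn_integral_of_compact_support (f := fun x (g : G) => f (g⁻¹ • x)) hL
    (hf.comp (continuous_snd.inv.smul continuous_fst)).continuousOn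
    fun x g hx hg => hfL x hx g hg).continuousAt hBx

lemma orbitIntegral_pos [μ.IsOpenPosMeasure] (hp : BourbakiProper G X) (hf : Continuous f)
    (hfc : HasCompactSupport f) (hf₀ : 0 ≤ f) {x : X} {g : G} (hgx : 0 < f (g • x)) :
    0 < orbitIntegral μ f x := by
  have hcont : Continuous fun g : G => f (g⁻¹ • x) :=
    hf.comp (continuous_inv.smul continuous_const)
  exact integral_pos_of_integrable_nonneg_nonzero (x := g⁻¹) hcont
    (hcont.integrable_of_hasCompactSupport (hp.hasCompactSupport_comp_inv_smul hfc x))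
    (fun _ => hf₀ _) (by simpa using hgx.ne')

end BourbakiProper

theorem stmt_4_general {G X : Type*} [Group G] [TopologicalSpace G] [IsTopologicalGroup G]
    [MeasurableSpace G] [BorelSpace G] (μ : Measure G) [μ.IsHaarMeasure]
    [TopologicalSpace X] [LocallyCompactSpace X] [MulAction G X] [ContinuousSMul G X]
    [CompletelyRegularSpace X]
    (hproper : BourbakiProper G X)
    [CompactSpace (Quotient (MulAction.orbitRel G X))] :
    ∃ c : X → ℝ, Continuous c ∧ (∀ x, 0 ≤ c x) ∧
      (∀ K : Set X, IsCompact K → IsCompact (tsupport c ∩ ⋃ g : G, g • K)) ∧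
      ∀ x : X, ∫ g, c (g⁻¹ • x) ∂μ = 1 := by
  obtain ⟨S, hS, hSX⟩ := MulAction.exists_isCompact_forall_exists_smul_mem G X
  obtain ⟨f, hfS, -, hfc, hf01⟩ :=
    exists_continuous_one_zero_of_isCompact hS isClosed_empty (disjoint_empty S)
  have hf₀ : 0 ≤ ⇑f := fun x => (hf01 x).1
  have hpos : ∀ x, 0 < orbitIntegral μ f x := fun x => by
    obtain ⟨g, hg⟩ := hSX x
    exact hproper.orbitIntegral_pos μ f.continuous hfc hf₀ (g := g) (by simp [hfS hg])
  have hcc : HasCompactSupport fun x => f x / orbitIntegral μ f x :=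
    hfc.mono fun _ hx => (div_ne_zero_iff.1 hx).1
  exact ⟨_, f.continuous.div (hproper.continuous_orbitIntegral μ f.continuous hfc)
      fun x => (hpos x).ne', fun x => div_nonneg (hf₀ x) (hpos x).le,
    fun K hK => hproper.isCompact_inter_iUnion_smul hcc (isClosed_tsupport _) hK,
    fun x => orbitIntegral_div_self μ f (hpos x).ne'⟩

/-- existence of a cutoff function on a locally compact G-compact
proper G-space: a continuous c : X → ℝ≥0 with supp(c) ∩ G·K compact for every
compact K and ∫_G c(g⁻¹x) dg = 1 for all x. -/
theorem stmt_4 {G X : Type*} [Group G] [TopologicalSpace G] [IsTopologicalGroup G]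
    [LocallyCompactSpace G] [T2Space G] [SecondCountableTopology G]
    [MeasurableSpace G] [BorelSpace G] (μ : Measure G) [μ.IsHaarMeasure]
    [TopologicalSpace X] [LocallyCompactSpace X] [MulAction G X] [ContinuousSMul G X]
    [CompletelyRegularSpace X]
    (hmet : ∀ K : Set X, IsCompact K → TopologicalSpace.MetrizableSpace K)
    [ParacompactSpace (Quotient (MulAction.orbitRel G X))]
    [T2Space (Quotient (MulAction.orbitRel G X))]
    (hproper : BourbakiProper G X)
    [CompactSpace (Quotient (MulAction.orbitRel G X))] :
    ∃ c : X → ℝ, Continuous c ∧ (∀ x, 0 ≤ c x) ∧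
      (∀ K : Set X, IsCompact K → IsCompact (tsupport c ∩ ⋃ g : G, g • K)) ∧
      ∀ x : X, ∫ g, c (g⁻¹ • x) ∂μ = 1 :=
  stmt_4_general μ hproper
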